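/- Define $I_{(2)}(a_1, a_2, x_1, x_2) = \mathrm{sgn}(x_1 - x_2)(a_1^2 x_2 - a_2^2 x_1) + 3 a_1 a_2 e^{-|x_1 - x_2|}$ for real numbers $a_1, a_2, x_1, x_2$. Then: (i) $I_{(2)}$ is invariant under the swap $(a_1, x_1) \leftrightarrow (a_2, x_2)$, i.e. $I_{(2)}(a_2, a_1, x_2, x_1) = I_{(2)}(a_1, a_2, x_1, x_2)$; and (ii) if $x_1, x_2 : J \to \mathbb{R}$ are differentiable functions on an open interval $J$ satisfying the mCH $2$-peakon system with constants $a_1, a_2$ and $x_1(t) \neq x_2(t)$ for all $t \in J$, then $t \mapsto I_{(2)}(a_1, a_2, x_1(t), x_2(t))$ is constant on $J$. -/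

import Mathlib

/-!
Off the diagonal `x₁ = x₂` the sign `ε = sgn(x₁ - x₂)` is locally constant, so along a solution
`I₍₂₎` is locally the smooth function `ε (a₁² x₂ - a₂² x₁) + 3 a₁ a₂ e^{-ε (x₁ - x₂)}`. Its time
derivative is `ε (a₁² ẋ₂ - a₂² ẋ₁) - 3 ε a₁ a₂ e^{-|x₁ - x₂|} (ẋ₁ - ẋ₂)`, and for the peakon
velocities both terms equal `± 2 ε a₁ a₂ (a₁² - a₂²) e^{-|x₁ - x₂|}`, so they cancel. A function
with vanishing derivative on the connected open set `J` is constant.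
-/

open Filter Topology

/-- The permutation-invariant 2-peakon quantity
`I₍₂₎(a₁,a₂,x₁,x₂) = sgn(x₁-x₂)(a₁² x₂ - a₂² x₁) + 3 a₁ a₂ e^{-|x₁-x₂|}`. -/
noncomputable def Itwo (a₁ a₂ x₁ x₂ : ℝ) : ℝ :=
  Real.sign (x₁ - x₂) * (a₁ ^ 2 * x₂ - a₂ ^ 2 * x₁)
    + 3 * a₁ * a₂ * Real.exp (-|x₁ - x₂|)

theorem Real.sign_mul_self_eq_abs (r : ℝ) : Real.sign r * r = |r| := by
  rcases lt_trichotomy r 0 with hr | rfl | hr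
  · rw [Real.sign_of_neg hr, abs_of_neg hr, neg_one_mul]
  · simp
  · rw [Real.sign_of_pos hr, abs_of_pos hr, one_mul]

theorem Real.eventually_sign_eq {X : Type*} [TopologicalSpace X] {f : X → ℝ} {x : X}
    (hf : ContinuousAt f x) (hx : f x ≠ 0) : ∀ᶠ y in 𝓝 x, Real.sign (f y) = Real.sign (f x) := by
  rcases hx.lt_or_gt with hneg | hpos
  · filter_upwards [hf.eventually_lt continuousAt_const hneg] with y hy
    rw [Real.sign_of_neg hy, Real.sign_of_neg hneg]
  · filter_upwards [continuousAt_const.eventually_lt hf hpos] with y hy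
    rw [Real.sign_of_pos hy, Real.sign_of_pos hpos]

theorem Itwo_swap (a₁ a₂ x₁ x₂ : ℝ) : Itwo a₂ a₁ x₂ x₁ = Itwo a₁ a₂ x₁ x₂ := by
  rw [Itwo, Itwo, ← neg_sub x₁ x₂, Real.sign_neg, abs_neg]
  ring

noncomputable def ItwoBranch (ε a₁ a₂ x₁ x₂ : ℝ) : ℝ :=
  ε * (a₁ ^ 2 * x₂ - a₂ ^ 2 * x₁) + 3 * a₁ * a₂ * Real.exp (-(ε * (x₁ - x₂)))

theorem Itwo_eq_ItwoBranch_sign (a₁ a₂ x₁ x₂ : ℝ) :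
    Itwo a₁ a₂ x₁ x₂ = ItwoBranch (Real.sign (x₁ - x₂)) a₁ a₂ x₁ x₂ := by
  rw [Itwo, ItwoBranch, Real.sign_mul_self_eq_abs]

theorem hasDerivAt_ItwoBranch {x₁ x₂ : ℝ → ℝ} {v₁ v₂ t : ℝ} (ε a₁ a₂ : ℝ)
    (h₁ : HasDerivAt x₁ v₁ t) (h₂ : HasDerivAt x₂ v₂ t) :
    HasDerivAt (fun s => ItwoBranch ε a₁ a₂ (x₁ s) (x₂ s))
      (ε * (a₁ ^ 2 * v₂ - a₂ ^ 2 * v₁)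
        - 3 * a₁ * a₂ * Real.exp (-(ε * (x₁ t - x₂ t))) * (ε * (v₁ - v₂))) t := by
  have h := (((h₂.const_mul (a₁ ^ 2)).sub (h₁.const_mul (a₂ ^ 2))).const_mul ε).add
    ((((h₁.sub h₂).const_mul ε).neg).exp.const_mul (3 * a₁ * a₂))
  exact h.congr_deriv (by simp only [Pi.neg_apply, Pi.sub_apply]; ring)

theorem hasDerivAt_Itwo_of_peakon {a₁ a₂ t : ℝ} {x₁ x₂ : ℝ → ℝ} (hne : x₁ t ≠ x₂ t)
    (h₁ : HasDerivAt x₁ ((2/3) * a₁ ^ 2 + 2 * a₁ * a₂ * Real.exp (-|x₁ t - x₂ t|)) t)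
    (h₂ : HasDerivAt x₂ ((2/3) * a₂ ^ 2 + 2 * a₁ * a₂ * Real.exp (-|x₁ t - x₂ t|)) t) :
    HasDerivAt (fun s => Itwo a₁ a₂ (x₁ s) (x₂ s)) 0 t := by
  set ε := Real.sign (x₁ t - x₂ t)
  have hsign : ∀ᶠ s in 𝓝 t, Real.sign (x₁ s - x₂ s) = ε :=
    Real.eventually_sign_eq (h₁.sub h₂).continuousAt (sub_ne_zero.mpr hne)
  have hlocal : (fun s => Itwo a₁ a₂ (x₁ s) (x₂ s)) =ᶠ[𝓝 t]
      fun s => ItwoBranch ε a₁ a₂ (x₁ s) (x₂ s) := by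
    filter_upwards [hsign] with s hs
    rw [Itwo_eq_ItwoBranch_sign, hs]
  refine (hasDerivAt_ItwoBranch ε a₁ a₂ h₁ h₂).congr_of_eventuallyEq hlocal |>.congr_deriv ?_
  rw [Real.sign_mul_self_eq_abs]
  ring

/-- (i) `I₍₂₎` is invariant under the swap
`(a₁,x₁) ↔ (a₂,x₂)`; (ii) `I₍₂₎` is constant along any solution of the mCH
2-peakon system with `x₁(t) ≠ x₂(t)` on `J`. -/
theorem Itwo_swap_invariant_and_constant :
    (∀ a₁ a₂ x₁ x₂ : ℝ, Itwo a₂ a₁ x₂ x₁ = Itwo a₁ a₂ x₁ x₂)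
    ∧ (∀ (a₁ a₂ : ℝ) (x₁ x₂ : ℝ → ℝ) (J : Set ℝ),
        IsOpen J → J.OrdConnected →
        (∀ t ∈ J, x₁ t ≠ x₂ t) →
        (∀ t ∈ J, HasDerivAt x₁ ((2/3) * a₁ ^ 2
          + 2 * a₁ * a₂ * Real.exp (-|x₁ t - x₂ t|)) t) →
        (∀ t ∈ J, HasDerivAt x₂ ((2/3) * a₂ ^ 2
          + 2 * a₁ * a₂ * Real.exp (-|x₁ t - x₂ t|)) t) →
        ∀ t ∈ J, ∀ t' ∈ J,
          Itwo a₁ a₂ (x₁ t) (x₂ t) = Itwo a₁ a₂ (x₁ t') (x₂ t')) := by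
  refine ⟨Itwo_swap, fun a₁ a₂ x₁ x₂ J hJ hJconn hne h₁ h₂ t ht t' ht' => ?_⟩
  have hderiv : ∀ s ∈ J, HasDerivAt (fun u => Itwo a₁ a₂ (x₁ u) (x₂ u)) 0 s := fun s hs =>
    hasDerivAt_Itwo_of_peakon (hne s hs) (h₁ s hs) (h₂ s hs)
  exact hJ.is_const_of_deriv_eq_zero hJconn.isPreconnected
    (fun s hs => (hderiv s hs).differentiableAt.differentiableWithinAt)
    (fun s hs => (hderiv s hs).deriv) ht ht'
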